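/- arXiv:1203.2543 — 2 statements merged into one kernel-verified Lean document; each statement's English description precedes it below -/
import Mathlib

section
/- In the power of a cycle C_n^k with 2k + 2 ≤ n ≤ 3k + 1, every induced path on 3 vertices is contained in an induced 4-cycle; consequently every biclique of C_n^k induces a C_4. -/
open SimpleGraph

/-- The `k`-th power of a path on `n` vertices: `v_i ~ v_j` iff `0 < |i - j| ≤ k`. -/
def pathPower (n k : ℕ) : SimpleGraph (Fin n) :=
  SimpleGraph.fromRel (fun i j => i.val ≤ j.val ∧ j.val ≤ i.val + k)

/-- The cyclic distance between two vertices of `ZMod n`. -/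
def cdist (n : ℕ) (i j : ZMod n) : ℕ := min (i - j).val (j - i).val

/-- The `k`-th power of a cycle on `n` vertices: `v_i ~ v_j` iff the
cyclic distance between `i` and `j` is between `1` and `k`. -/
def cyclePower (n k : ℕ) : SimpleGraph (ZMod n) :=
  SimpleGraph.fromRel (fun i j => cdist n i j ≤ k)

/-- `S` induces a complete bipartite subgraph of `G`. -/
def IsCompleteBipartiteSet {V : Type*} (G : SimpleGraph V) (S : Set V) : Prop :=
  ∃ A B : Set V, A ∪ B = S ∧ Disjoint A B ∧
    (∀ a ∈ A, ∀ b ∈ B, G.Adj a b) ∧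
    (∀ a ∈ A, ∀ a' ∈ A, ¬ G.Adj a a') ∧
    (∀ b ∈ B, ∀ b' ∈ B, ¬ G.Adj b b')

/-- A biclique: a maximal set of vertices inducing a complete bipartite
subgraph with at least one edge. -/
def IsBiclique {V : Type*} (G : SimpleGraph V) (S : Set V) : Prop :=
  IsCompleteBipartiteSet G S ∧ (∃ u ∈ S, ∃ v ∈ S, G.Adj u v) ∧
  ∀ T : Set V, S ⊆ T → IsCompleteBipartiteSet G T → T = S

/-- A set is monochromatic under a colouring. -/
def Monochromatic {V α : Type*} (c : V → α) (S : Set V) : Prop :=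
  ∃ a, ∀ v ∈ S, c v = a

/-- `G` admits a biclique-colouring with `m` colours. -/
def BicliqueColorable {V : Type*} (G : SimpleGraph V) (m : ℕ) : Prop :=
  ∃ c : V → Fin m, ∀ S : Set V, IsBiclique G S → ¬ Monochromatic c S

/-- The biclique-chromatic number. -/
noncomputable def bicliqueChromaticNumber {V : Type*} (G : SimpleGraph V) : ℕ :=
  sInf {m | BicliqueColorable G m}

/-- `a`, `b`, `c` induce a path on three vertices (with middle vertex `b`). -/
def IsInducedP3 {V : Type*} (G : SimpleGraph V) (a b c : V) : Prop :=
  a ≠ b ∧ b ≠ c ∧ a ≠ c ∧ G.Adj a b ∧ G.Adj b c ∧ ¬ G.Adj a c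

/-- `a`, `b`, `c`, `d` induce a four-cycle (in this cyclic order). -/
def IsInducedC4 {V : Type*} (G : SimpleGraph V) (a b c d : V) : Prop :=
  a ≠ b ∧ a ≠ c ∧ a ≠ d ∧ b ≠ c ∧ b ≠ d ∧ c ≠ d ∧
  G.Adj a b ∧ G.Adj b c ∧ G.Adj c d ∧ G.Adj d a ∧ ¬ G.Adj a c ∧ ¬ G.Adj b d

/-! Measuring every vertex by its offset `(x - b).val ∈ [0, n)` from a base vertex `b` turns
adjacency in `C_n^k` into a linear condition on offsets (`cyclePower_adj_iff_val_sub`), so all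
local facts about `C_n^k` become linear arithmetic. In an induced path `a - b - c` one end has
offset in `[1, k]` and the other offset `p ∈ [n - k, n - 1]`; the vertex at offset
`max (k + 1) (p - k)` closes an induced `C_4`, and its adjacency to the end of small offset is
where `n ≤ 3k + 1` is used. For bicliques only three properties of the graph matter: it is
claw-free, so each side of a biclique has at most two vertices; every edge extends to an induced
`P_3` (this needs `2k + 2 ≤ n`); and every induced `P_3` extends to an induced `C_4`. Together
they put any complete bipartite set with an edge inside an induced `C_4`, and maximality forces
equality. -/

section InducedFourCycles
variable {V : Type*} {G : SimpleGraph V}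

def IsClawFree (G : SimpleGraph V) : Prop :=
  ∀ ⦃y x₁ x₂ x₃ : V⦄, G.Adj y x₁ → G.Adj y x₂ → G.Adj y x₃ →
    ¬G.Adj x₁ x₂ → ¬G.Adj x₁ x₃ → ¬G.Adj x₂ x₃ → x₁ = x₂ ∨ x₁ = x₃ ∨ x₂ = x₃

lemma IsInducedC4.isCompleteBipartiteSet {a b c d : V} (h : IsInducedC4 G a b c d) :
    IsCompleteBipartiteSet G {a, b, c, d} := by
  obtain ⟨hab, hac, had, hbc, hbd, hcd, eab, ebc, ecd, eda, nac, nbd⟩ := h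
  refine ⟨{a, c}, {b, d}, ?_, ?_, ?_, ?_, ?_⟩
  · ext x; simp only [Set.mem_union, Set.mem_insert_iff, Set.mem_singleton_iff]; tauto
  · simp only [Set.disjoint_insert_left, Set.disjoint_singleton_left, Set.mem_insert_iff,
      Set.mem_singleton_iff]
    tauto
  · rintro x (rfl | rfl) y (rfl | rfl)
    exacts [eab, eda.symm, ebc.symm, ecd]
  · rintro x (rfl | rfl) y (rfl | rfl)
    exacts [G.irrefl, nac, fun h ↦ nac h.symm, G.irrefl]
  · rintro x (rfl | rfl) y (rfl | rfl)
    exacts [G.irrefl, nbd, fun h ↦ nbd h.symm, G.irrefl]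

lemma IsClawFree.eq_or_eq_of_isIndepSet (hG : IsClawFree G) {A : Set V} {v : V}
    (hAv : ∀ a ∈ A, G.Adj a v) (hA : ∀ a ∈ A, ∀ a' ∈ A, ¬G.Adj a a')
    {u a' x : V} (hu : u ∈ A) (ha' : a' ∈ A) (hne : a' ≠ u) (hx : x ∈ A) :
    x = u ∨ x = a' := by
  rcases hG (hAv u hu).symm (hAv a' ha').symm (hAv x hx).symm (hA u hu a' ha') (hA u hu x hx)
    (hA a' ha' x hx) with h | h | h
  exacts [(hne h.symm).elim, Or.inl h.symm, Or.inr h.symm]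

lemma IsClawFree.exists_inducedP3_subset (hG : IsClawFree G)
    (hedge : ∀ u v, G.Adj u v → ∃ w, IsInducedP3 G u v w) {A : Set V} {v : V}
    (hAv : ∀ a ∈ A, G.Adj a v) (hA : ∀ a ∈ A, ∀ a' ∈ A, ¬G.Adj a a') {u : V} (hu : u ∈ A) :
    ∃ x, IsInducedP3 G u v x ∧ A ⊆ {u, x} := by
  by_cases h : ∃ a' ∈ A, a' ≠ u
  · obtain ⟨a', ha', hne⟩ := h
    refine ⟨a', ⟨(hAv u hu).ne, (hAv a' ha').ne.symm, hne.symm, hAv u hu, (hAv a' ha').symm,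
      hA u hu a' ha'⟩, fun x hx ↦ hG.eq_or_eq_of_isIndepSet hAv hA hu ha' hne hx⟩
  · push Not at h
    obtain ⟨w, hw⟩ := hedge u v (hAv u hu)
    exact ⟨w, hw, fun x hx ↦ Or.inl (h x hx)⟩

lemma IsClawFree.exists_inducedC4_superset_of_subsingleton (hG : IsClawFree G)
    (hP3 : ∀ a b c, IsInducedP3 G a b c → ∃ d, IsInducedC4 G a b c d)
    (hedge : ∀ u v, G.Adj u v → ∃ w, IsInducedP3 G u v w) {A B : Set V}
    (hAB : ∀ a ∈ A, ∀ b ∈ B, G.Adj a b) (hA : ∀ a ∈ A, ∀ a' ∈ A, ¬G.Adj a a')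
    {u v : V} (hu : u ∈ A) (hv : v ∈ B) (hB : ∀ b ∈ B, b = v) :
    ∃ w x y z, IsInducedC4 G w x y z ∧ A ∪ B ⊆ {w, x, y, z} := by
  obtain ⟨x, hx, hAx⟩ := hG.exists_inducedP3_subset hedge (fun a ha ↦ hAB a ha v hv) hA hu
  obtain ⟨d, hd⟩ := hP3 u v x hx
  refine ⟨u, v, x, d, hd, Set.union_subset (fun y hy ↦ ?_) (fun y hy ↦ ?_)⟩
  · rcases hAx hy with rfl | rfl <;> simp
  · simp [hB y hy]

lemma IsClawFree.exists_inducedC4_superset (hG : IsClawFree G)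
    (hP3 : ∀ a b c, IsInducedP3 G a b c → ∃ d, IsInducedC4 G a b c d)
    (hedge : ∀ u v, G.Adj u v → ∃ w, IsInducedP3 G u v w) {A B : Set V}
    (hAB : ∀ a ∈ A, ∀ b ∈ B, G.Adj a b) (hA : ∀ a ∈ A, ∀ a' ∈ A, ¬G.Adj a a')
    (hB : ∀ b ∈ B, ∀ b' ∈ B, ¬G.Adj b b') {u v : V} (hu : u ∈ A) (hv : v ∈ B) :
    ∃ w x y z, IsInducedC4 G w x y z ∧ A ∪ B ⊆ {w, x, y, z} := by
  by_cases hB₁ : ∀ b ∈ B, b = v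
  · exact hG.exists_inducedC4_superset_of_subsingleton hP3 hedge hAB hA hu hv hB₁
  by_cases hA₁ : ∀ a ∈ A, a = u
  · rw [Set.union_comm]
    exact hG.exists_inducedC4_superset_of_subsingleton hP3 hedge
      (fun b hb a ha ↦ (hAB a ha b hb).symm) hB hv hu hA₁
  push Not at hA₁ hB₁
  obtain ⟨a', ha', hau⟩ := hA₁
  obtain ⟨b', hb', hbv⟩ := hB₁
  have hBu : ∀ b ∈ B, G.Adj b u := fun b hb ↦ (hAB u hu b hb).symm
  refine ⟨u, v, a', b', ⟨(hAB u hu v hv).ne, hau.symm, (hAB u hu b' hb').ne,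
    (hAB a' ha' v hv).ne.symm, hbv.symm, (hAB a' ha' b' hb').ne, hAB u hu v hv,
    (hAB a' ha' v hv).symm, hAB a' ha' b' hb', hBu b' hb', hA u hu a' ha', hB v hv b' hb'⟩,
    Set.union_subset (fun y hy ↦ ?_) (fun y hy ↦ ?_)⟩
  · rcases hG.eq_or_eq_of_isIndepSet (fun a ha ↦ hAB a ha v hv) hA hu ha' hau hy
      with rfl | rfl <;> simp
  · rcases hG.eq_or_eq_of_isIndepSet hBu hB hv hb' hbv hy with rfl | rfl <;> simp

theorem IsClawFree.exists_inducedC4_eq_of_isBiclique (hG : IsClawFree G)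
    (hP3 : ∀ a b c, IsInducedP3 G a b c → ∃ d, IsInducedC4 G a b c d)
    (hedge : ∀ u v, G.Adj u v → ∃ w, IsInducedP3 G u v w) {S : Set V} (hS : IsBiclique G S) :
    ∃ w x y z, IsInducedC4 G w x y z ∧ S = {w, x, y, z} := by
  obtain ⟨⟨A, B, rfl, -, hAB, hA, hB⟩, ⟨u, hu, v, hv, huv⟩, hmax⟩ := hS
  obtain ⟨a, b, ha, hb⟩ : ∃ a b, a ∈ A ∧ b ∈ B := by
    rcases hu with hu | hu <;> rcases hv with hv | hv
    exacts [(hA u hu v hv huv).elim, ⟨u, v, hu, hv⟩, ⟨v, u, hv, hu⟩, (hB u hu v hv huv).elim]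
  obtain ⟨w, x, y, z, hC4, hsub⟩ := hG.exists_inducedC4_superset hP3 hedge hAB hA hB ha hb
  exact ⟨w, x, y, z, hC4, (hmax _ hsub hC4.isCompleteBipartiteSet).symm⟩

end InducedFourCycles

section CyclePower
variable {n k : ℕ}

lemma cyclePower_adj_iff_val [NeZero n] {x y : ZMod n} :
    (cyclePower n k).Adj x y ↔ x.val ≠ y.val ∧
      (x.val ≤ y.val + k ∧ y.val ≤ x.val + k ∨ x.val + n ≤ y.val + k ∨ y.val + n ≤ x.val + k) := by
  have hsub : ∀ x y : ZMod n, y.val < x.val →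
      (x - y).val = x.val - y.val ∧ (y - x).val = n - (x.val - y.val) := by
    intro x y hxy
    have hne : x - y ≠ 0 := sub_ne_zero.2 fun h ↦ hxy.ne (by rw [h])
    have hval := ZMod.val_sub hxy.le
    refine ⟨hval, ?_⟩
    rw [← neg_sub, ZMod.neg_val, if_neg hne, hval]
  simp only [cyclePower, SimpleGraph.fromRel_adj, cdist, ← (ZMod.val_injective n).ne_iff]
  have := x.val_lt
  have := y.val_lt
  rcases lt_trichotomy x.val y.val with h | h | h
  · obtain ⟨h₁, h₂⟩ := hsub y x h
    rw [h₁, h₂]; omega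
  · simp [h]
  · obtain ⟨h₁, h₂⟩ := hsub x y h
    rw [h₁, h₂]; omega

lemma cyclePower_adj_sub_right (b : ZMod n) {x y : ZMod n} :
    (cyclePower n k).Adj (x - b) (y - b) ↔ (cyclePower n k).Adj x y := by
  simp [cyclePower, cdist]

lemma cyclePower_adj_iff_val_sub [NeZero n] (b : ZMod n) {x y : ZMod n} :
    (cyclePower n k).Adj x y ↔ (x - b).val ≠ (y - b).val ∧
      ((x - b).val ≤ (y - b).val + k ∧ (y - b).val ≤ (x - b).val + k ∨
        (x - b).val + n ≤ (y - b).val + k ∨ (y - b).val + n ≤ (x - b).val + k) := by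
  rw [← cyclePower_adj_sub_right b, cyclePower_adj_iff_val]

lemma ZMod.eq_iff_val_sub_eq [NeZero n] {x y : ZMod n} (b : ZMod n) :
    x = y ↔ (x - b).val = (y - b).val := by
  rw [(ZMod.val_injective n).eq_iff, sub_left_inj]

lemma ZMod.exists_val_sub_eq (b : ZMod n) {m : ℕ} (hm : m < n) : ∃ d : ZMod n, (d - b).val = m :=
  ⟨b + m, by rw [add_sub_cancel_left, ZMod.val_natCast_of_lt hm]⟩

lemma cyclePower_isClawFree [NeZero n] : IsClawFree (cyclePower n k) := by
  intro y x₁ x₂ x₃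
  simp only [cyclePower_adj_iff_val_sub y, ZMod.eq_iff_val_sub_eq y, sub_self, ZMod.val_zero]
  have := (x₁ - y).val_lt
  have := (x₂ - y).val_lt
  have := (x₃ - y).val_lt
  omega

lemma cyclePower_exists_inducedP3 (hn : 2 * k + 2 ≤ n) {u v : ZMod n}
    (huv : (cyclePower n k).Adj u v) : ∃ w, IsInducedP3 (cyclePower n k) u v w := by
  have : NeZero n := ⟨by omega⟩
  rw [cyclePower_adj_iff_val_sub v, sub_self, ZMod.val_zero] at huv
  have := (u - v).val_lt
  -- `w` is `u` moved `k + 1` steps across `v`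
  obtain ⟨w, hw⟩ := ZMod.exists_val_sub_eq v (m := if (u - v).val ≤ k then n + (u - v).val - (k + 1)
    else (u - v).val + (k + 1) - n) (by split_ifs <;> omega)
  refine ⟨w, ?_⟩
  simp only [IsInducedP3, cyclePower_adj_iff_val_sub v, ne_eq, ZMod.eq_iff_val_sub_eq v, sub_self,
    ZMod.val_zero, hw]
  split_ifs <;> omega

lemma cyclePower_exists_inducedC4 (hn₁ : 2 * k + 2 ≤ n) (hn₂ : n ≤ 3 * k + 1) {a b c : ZMod n}
    (h : IsInducedP3 (cyclePower n k) a b c) : ∃ d, IsInducedC4 (cyclePower n k) a b c d := by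
  have : NeZero n := ⟨by omega⟩
  simp only [IsInducedP3, cyclePower_adj_iff_val_sub b, ne_eq, ZMod.eq_iff_val_sub_eq b, sub_self,
    ZMod.val_zero] at h
  have := (a - b).val_lt
  have := (c - b).val_lt
  obtain ⟨d, hd⟩ := ZMod.exists_val_sub_eq b
    (m := max (k + 1) (max (a - b).val (c - b).val - k)) (by omega)
  refine ⟨d, ?_⟩
  simp only [IsInducedC4, cyclePower_adj_iff_val_sub b, ne_eq, ZMod.eq_iff_val_sub_eq b, sub_self,
    ZMod.val_zero, hd]
  omega

end CyclePower

/-- In `C_n^k` with `2k + 2 ≤ n ≤ 3k + 1`, every induced `P_3` is contained in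
an induced `C_4`; consequently every biclique induces a `C_4`. -/
theorem stmt_6 (n k : ℕ) (h1 : 2 * k + 2 ≤ n) (h2 : n ≤ 3 * k + 1) :
    (∀ a b c : ZMod n, IsInducedP3 (cyclePower n k) a b c →
      ∃ w x y z : ZMod n, IsInducedC4 (cyclePower n k) w x y z ∧
        ({a, b, c} : Set (ZMod n)) ⊆ {w, x, y, z}) ∧
    (∀ S : Set (ZMod n), IsBiclique (cyclePower n k) S →
      ∃ w x y z : ZMod n, IsInducedC4 (cyclePower n k) w x y z ∧
        S = {w, x, y, z}) := by
  have : NeZero n := ⟨by omega⟩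
  refine ⟨fun a b c h ↦ ?_, fun S hS ↦ ?_⟩
  · obtain ⟨d, hd⟩ := cyclePower_exists_inducedC4 h1 h2 h
    exact ⟨a, b, c, d, hd, by simp [Set.insert_subset_iff]⟩
  · exact cyclePower_isClawFree.exists_inducedC4_eq_of_isBiclique
      (fun _ _ _ ↦ cyclePower_exists_inducedC4 h1 h2) (fun _ _ ↦ cyclePower_exists_inducedP3 h1) hS
end

section
/- The power of a path P_n^k with n ≥ 2k + 1 and k ≥ 1 has biclique-chromatic number exactly 2; an optimal colouring is obtained by writing n = a·k + t with 0 ≤ t < k and colouring consecutive blocks of size k alternately with two colours, the final block of size t receiving the colour continuing the alternation. -/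
open SimpleGraph

/-! A pair of vertices is never a biclique of `P_n^k` when `n ≥ 2k + 1`: for an edge `u < v`,
the vertex `v + k` (or, if it does not exist, `v - k - 1`) is adjacent to exactly one endpoint,
so the edge extends to a larger complete bipartite set. Hence every biclique contains an
induced `P_3` `a - b - c`, i.e. `|a - c| > k` while `b` lies within `k` of both; then `a`, `b`, `c`
cannot all lie in blocks `⌊i / k⌋` of the same parity. Since `P_n^k` has an edge, it has a
biclique, which rules out one colour. -/

section

variable {V : Type*} {G : SimpleGraph V} {S : Set V} {u v w : V}

lemma Monochromatic.comp {α β : Type*} {c : V → α} (f : α → β) (h : Monochromatic c S) :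
    Monochromatic (f ∘ c) S :=
  let ⟨a, ha⟩ := h
  ⟨f a, fun x hx => congrArg f (ha x hx)⟩

lemma BicliqueColorable.two_le {m : ℕ} (hm : BicliqueColorable G m) (hS : IsBiclique G S) :
    2 ≤ m := by
  obtain ⟨c, hc⟩ := hm
  obtain ⟨x, hx, -⟩ := hS.2.1
  by_contra! hlt
  interval_cases m
  · exact (c x).elim0
  · exact hc S hS ⟨0, fun y _ => Subsingleton.elim _ _⟩

lemma bicliqueChromaticNumber_eq_two (h2 : BicliqueColorable G 2) (hS : IsBiclique G S) :
    bicliqueChromaticNumber G = 2 :=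
  le_antisymm (Nat.sInf_le h2) (le_csInf ⟨2, h2⟩ fun _ hm => hm.two_le hS)

lemma exists_isBiclique_of_adj [Finite V] (huv : G.Adj u v) : ∃ S, IsBiclique G S := by
  have hedge : IsCompleteBipartiteSet G {u, v} :=
    ⟨{u}, {v}, rfl, Set.disjoint_singleton.2 huv.ne, by simpa using huv, by simp, by simp⟩
  obtain ⟨S, -, ⟨huvS, hS⟩, hmax⟩ := Finite.exists_le_maximal
    (p := fun T => {u, v} ⊆ T ∧ IsCompleteBipartiteSet G T) ⟨subset_rfl, hedge⟩
  refine ⟨S, hS, ⟨u, huvS (by simp), v, huvS (by simp), huv⟩, fun T hST hT => ?_⟩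
  exact (hmax ⟨huvS.trans hST, hT⟩ hST).antisymm hST

lemma IsBiclique.adj_of_pair (h : IsBiclique G {u, v}) : G.Adj u v := by
  obtain ⟨-, ⟨x, hx, y, hy, hxy⟩, -⟩ := h
  rcases hx with rfl | rfl <;> rcases hy with rfl | rfl
  exacts [absurd hxy (G.irrefl), hxy, hxy.symm, absurd hxy (G.irrefl)]

lemma not_isBiclique_pair (hvw : G.Adj v w) (huw : ¬ G.Adj u w) (hne : u ≠ w) :
    ¬ IsBiclique G {u, v} := by
  intro h
  have huv := h.adj_of_pair
  have hbip : IsCompleteBipartiteSet G {u, v, w} := by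
    refine ⟨{u, w}, {v}, by ext; simp; tauto, ?_, ?_, ?_, by simp⟩
    · simpa [Set.disjoint_singleton_right] using ⟨huv.ne.symm, hvw.ne⟩
    · simpa using ⟨huv, hvw.symm⟩
    · simpa [huw] using fun h => huw h.symm
  have hw : w ∈ ({u, v} : Set V) := h.2.2 _ (by intro; simp; tauto) hbip ▸ by simp
  rcases hw with rfl | rfl
  exacts [hne rfl, hvw.ne rfl]

lemma IsCompleteBipartiteSet.exists_isInducedP3 (hS : IsCompleteBipartiteSet G S)
    (hu : u ∈ S) (hv : v ∈ S) (hw : w ∈ S) (huv : G.Adj u v) (hwu : w ≠ u) (hwv : w ≠ v) :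
    ∃ a ∈ S, ∃ b ∈ S, ∃ c ∈ S, IsInducedP3 G a b c := by
  obtain ⟨A, B, rfl, -, hAB, hA, hB⟩ := hS
  have hBA : ∀ b ∈ B, ∀ a ∈ A, G.Adj b a := fun b hb a ha => (hAB a ha b hb).symm
  rcases hu with hu | hu <;> rcases hv with hv | hv
  · exact absurd huv (hA u hu v hv)
  · rcases hw with hw | hw
    · exact ⟨w, Or.inl hw, v, Or.inr hv, u, Or.inl hu,
        hwv, huv.ne.symm, hwu, hAB w hw v hv, huv.symm, hA w hw u hu⟩
    · exact ⟨w, Or.inr hw, u, Or.inl hu, v, Or.inr hv,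
        hwu, huv.ne, hwv, hBA w hw u hu, huv, hB w hw v hv⟩
  · rcases hw with hw | hw
    · exact ⟨w, Or.inl hw, u, Or.inr hu, v, Or.inl hv,
        hwu, huv.ne, hwv, hAB w hw u hu, huv, hA w hw v hv⟩
    · exact ⟨w, Or.inr hw, v, Or.inl hv, u, Or.inr hu,
        hwv, huv.ne.symm, hwu, hBA w hw v hv, huv.symm, hB w hw u hu⟩
  · exact absurd huv (hB u hu v hv)

lemma IsBiclique.exists_isInducedP3 (hG : ∀ u v, ¬ IsBiclique G {u, v}) (hS : IsBiclique G S) :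
    ∃ a ∈ S, ∃ b ∈ S, ∃ c ∈ S, IsInducedP3 G a b c := by
  obtain ⟨u, hu, v, hv, huv⟩ := hS.2.1
  obtain ⟨w, hw, hwuv⟩ : ∃ w ∈ S, w ∉ ({u, v} : Set V) := by
    by_contra! hsub
    have hpair : S = {u, v} := Set.Subset.antisymm hsub (by simp [Set.insert_subset_iff, hu, hv])
    exact hG u v (hpair ▸ hS)
  simp only [Set.mem_insert_iff, Set.mem_singleton_iff, not_or] at hwuv
  exact hS.1.exists_isInducedP3 hu hv hw huv hwuv.1 hwuv.2

end

lemma pathPower_adj {n k : ℕ} {i j : Fin n} :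
    (pathPower n k).Adj i j ↔ i.val ≠ j.val ∧ j.val ≤ i.val + k ∧ i.val ≤ j.val + k := by
  simp only [pathPower, SimpleGraph.fromRel_adj, ne_eq, Fin.ext_iff]
  omega

lemma pathPower_not_isBiclique_pair {n k : ℕ} (h : 2 * k + 1 ≤ n) (u v : Fin n) :
    ¬ IsBiclique (pathPower n k) {u, v} := by
  intro hS
  have huv := pathPower_adj.1 hS.adj_of_pair
  wlog hlt : u.val < v.val generalizing u v
  · exact this v u (Set.pair_comm u v ▸ hS) (by omega) (by omega)
  by_cases hnext : v.val + k < n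
  · exact not_isBiclique_pair (w := ⟨v.val + k, hnext⟩) (by simp only [pathPower_adj]; omega)
      (by simp only [pathPower_adj]; omega) (Fin.ne_of_val_ne (by simp only; omega)) hS
  · exact not_isBiclique_pair (w := ⟨v.val - k - 1, by omega⟩) (by simp only [pathPower_adj]; omega)
      (by simp only [pathPower_adj]; omega) (Fin.ne_of_val_ne (by simp only; omega))
      (Set.pair_comm u v ▸ hS)

lemma div_mod_two_ne_or_ne {p q r k : ℕ} (hpq : q ≤ p + k) (hqr : r ≤ q + k) (hpr : p + k < r) :
    p / k % 2 ≠ q / k % 2 ∨ q / k % 2 ≠ r / k % 2 := by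
  have hk : 0 < k := by omega
  have hpq' : p / k ≤ q / k := Nat.div_le_div_right (by omega)
  have hqr' : q / k ≤ r / k := Nat.div_le_div_right (by omega)
  have hq : q / k ≤ p / k + 1 := Nat.add_div_right p hk ▸ Nat.div_le_div_right hpq
  have hr : r / k ≤ q / k + 1 := Nat.add_div_right q hk ▸ Nat.div_le_div_right hqr
  have hpr' : p / k + 1 ≤ r / k := Nat.add_div_right p hk ▸ Nat.div_le_div_right hpr.le
  omega

lemma IsInducedP3.pathPower_div_mod_two_ne {n k : ℕ} {a b c : Fin n}
    (h : IsInducedP3 (pathPower n k) a b c) :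
    a.val / k % 2 ≠ b.val / k % 2 ∨ b.val / k % 2 ≠ c.val / k % 2 := by
  obtain ⟨-, -, hac, hab, hbc, hnac⟩ := h
  rw [pathPower_adj] at hab hbc hnac
  rcases Nat.lt_or_gt_of_ne (Fin.val_ne_of_ne hac) with hlt | hlt
  · exact div_mod_two_ne_or_ne (by omega) (by omega) (by omega)
  · exact (div_mod_two_ne_or_ne (p := c.val) (by omega) (by omega) (by omega)).symm.imp
      Ne.symm Ne.symm

lemma IsBiclique.pathPower_not_monochromatic {n k : ℕ} (h : 2 * k + 1 ≤ n) {S : Set (Fin n)}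
    (hS : IsBiclique (pathPower n k) S) :
    ¬ Monochromatic (fun i : Fin n => i.val / k % 2) S := by
  obtain ⟨a, ha, b, hb, c, hc, hP3⟩ := hS.exists_isInducedP3 (pathPower_not_isBiclique_pair h)
  rintro ⟨x, hx⟩
  rcases hP3.pathPower_div_mod_two_ne with hne | hne
  exacts [hne ((hx a ha).trans (hx b hb).symm), hne ((hx b hb).trans (hx c hc).symm)]

/-- `P_n^k` with `n ≥ 2k + 1` and `k ≥ 1` has biclique-chromatic number 2;
the colouring by blocks of size `k` with alternating colours (the final partial
block continuing the alternation) is a biclique-colouring. -/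
theorem stmt_9 (n k : ℕ) (hk : 1 ≤ k) (h : 2 * k + 1 ≤ n) :
    bicliqueChromaticNumber (pathPower n k) = 2 ∧
    (∀ S : Set (Fin n), IsBiclique (pathPower n k) S →
      ¬ Monochromatic (fun i : Fin n => (i.val / k) % 2) S) := by
  have hparity : BicliqueColorable (pathPower n k) 2 :=
    ⟨fun i => ⟨i.val / k % 2, Nat.mod_lt _ two_pos⟩, fun S hS hmono =>
      hS.pathPower_not_monochromatic h (hmono.comp Fin.val)⟩
  have hedge : (pathPower n k).Adj ⟨0, by omega⟩ ⟨k, by omega⟩ := by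
    simp only [pathPower_adj]; omega
  obtain ⟨S, hS⟩ := exists_isBiclique_of_adj hedge
  exact ⟨bicliqueChromaticNumber_eq_two hparity hS, fun _ hS => hS.pathPower_not_monochromatic h⟩
end
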